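/- arXiv:1602.06026 — 2 statements merged into one kernel-verified Lean document; each statement's English description precedes it below -/
import Mathlib

section
/- Let F be a field and q ∈ F. Let M(q) be the 6×12 matrix over F with rows (q,0,0,0,0,0,0,0,0,0,1,−1), (0,q,0,0,0,0,0,0,0,1,0,−1), (0,0,q,0,0,0,0,0,0,1,−1,0), (0,0,0,1,0,0,0,−1,−1,0,0,0), (0,0,0,0,1,0,−1,0,1,0,0,0), (0,0,0,0,0,1,1,1,0,0,0,0). If q ≠ 0 then M(q) has rank 6, and if q = 0 then M(q) has rank 5. -/
/-!
For `q ≠ 0` the first six columns of `M(q)` form the nonsingular minor `diag(q, q, q, 1, 1, 1)`.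
For `q = 0` the rows satisfy `r₀ - r₁ + r₂ = 0`, so the rank drops below 6, while rows
`0, 1, 3, 4, 5` and columns `10, 9, 3, 4, 5` still cut out a `5 × 5` identity minor.
-/

open Matrix

namespace Matrix

variable {m n k R K : Type*}

theorem card_le_rank_of_det_submatrix_ne_zero [CommRing R] [IsDomain R] [Fintype n] [Fintype k]
    [DecidableEq k] (A : Matrix m n R) (r : k → m) (c : k → n) (h : (A.submatrix r c).det ≠ 0) :
    Fintype.card k ≤ A.rank :=
  (rank_of_det_ne_zero h).symm.le.trans (A.rank_submatrix_le r c)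

theorem rank_lt_card_height_of_vecMul_eq_zero [Field K] [Fintype m] [Fintype n]
    {A : Matrix m n K} {v : m → K} (hv : v ≠ 0) (h : v ᵥ* A = 0) : A.rank < Fintype.card m := by
  have hker : 0 < Module.finrank K (LinearMap.ker Aᵀ.mulVecLin) :=
    Module.finrank_pos_iff_exists_ne_zero.mpr
      ⟨⟨v, by simpa [mulVec_transpose] using h⟩, by simpa using hv⟩
  have := LinearMap.finrank_range_add_finrank_ker Aᵀ.mulVecLin
  rw [← rank_transpose, rank]
  simp only [Module.finrank_fintype_fun_eq_card] at this
  omega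

end Matrix

/-- The Hermite normal form matrix `M(q)` of the deformed relations has
rank 6 when `q ≠ 0` and rank 5 when `q = 0`. -/
theorem rank_deformed_HNF {F : Type*} [Field F] (q : F)
    (M : Matrix (Fin 6) (Fin 12) F)
    (hM : M = !![q, 0, 0, 0, 0, 0,  0,  0,  0, 0,  1, -1;
                 0, q, 0, 0, 0, 0,  0,  0,  0, 1,  0, -1;
                 0, 0, q, 0, 0, 0,  0,  0,  0, 1, -1,  0;
                 0, 0, 0, 1, 0, 0,  0, -1, -1, 0,  0,  0;
                 0, 0, 0, 0, 1, 0, -1,  0,  1, 0,  0,  0;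
                 0, 0, 0, 0, 0, 1,  1,  1,  0, 0,  0,  0]) :
    (q ≠ 0 → M.rank = 6) ∧ (q = 0 → M.rank = 5) := by
  refine ⟨fun hq => le_antisymm (M.rank_le_card_height.trans_eq (by simp)) ?_, fun hq => ?_⟩
  · have hdiag : M.submatrix id (Fin.castLE (by norm_num)) = diagonal ![q, q, q, 1, 1, 1] := by
      subst hM
      ext i j
      fin_cases i <;> fin_cases j <;> simp
    simpa using M.card_le_rank_of_det_submatrix_ne_zero id (Fin.castLE (by norm_num))
      (by simp [hdiag, Fin.prod_univ_succ, hq])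
  subst hq
  have hrel : ![1, -1, 1, 0, 0, 0] ᵥ* M = 0 := by
    subst hM
    ext j
    fin_cases j <;> simp [vecMul, dotProduct, Fin.sum_univ_succ]
  have hone : M.submatrix ![0, 1, 3, 4, 5] ![10, 9, 3, 4, 5] = 1 := by
    subst hM
    ext i j
    fin_cases i <;> fin_cases j <;> simp
  refine le_antisymm ?_ ?_
  · simpa [Nat.lt_succ_iff] using rank_lt_card_height_of_vecMul_eq_zero (by simp) hrel
  · simpa using M.card_le_rank_of_det_submatrix_ne_zero ![0, 1, 3, 4, 5] ![10, 9, 3, 4, 5]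
      (by simp [hone])
end

section
/- Let F be a field of characteristic zero, q ∈ F with q ≠ −3, and M an F-vector space with two F-bilinear operations ≺ and ≻ satisfying, for all a, b, c in M, the three deformed dendriform relations with parameter q: (q+3)[(a≻b)≺c − a≻(b≺c)] + (q−1)[a≻(c≺b) − b≻(a≺c) + b≻(c≺a) − c≻(a≺b)] = 0; (q+3)[(a≺b)≻c + (a≻b)≻c − a≻(b≻c)] + (q−1)[a≻(c≻b) − b≻(a≻c) + b≻(c≻a) − c≻(a≻b)] = 0; (q+3)[(a≺b)≺c − a≺(b≺c) − a≺(b≻c)] + (q−1)[a≺(c≺b) − b≺(a≺c) + b≺(c≺a) − c≺(a≺b) + a≺(c≻b) − b≺(a≻c) + b≺(c≻a) − c≺(a≻b)] = 0. Define the total product ab := a≺b + a≻b, and the polarized operations [a,b] := (1/2)(ab − ba), a∘b := (1/2)(ab + ba). Then for all a, b, c in M the three relations of the deformed polarized associative operad SA_q hold: [[a,b],c] − [[a,c],b] + [[b,c],a] = 0, q·[[a,c],b] + (a∘b)∘c − (b∘c)∘a = 0, and [a∘b,c] − [a,c]∘b − [b,c]∘a = 0. -/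
/-!
Adding the three deformed dendriform relations shows that the total product `μ = l + r`
(with `l = ≺`, `r = ≻`) satisfies a single deformed associativity relation: `q + 3` times the
associator of `(x, y, z)` plus `q - 1` times `x(zy) - y(xz) + y(zx) - z(xy)` vanishes. Each
relation of `SA_q`, multiplied by `q + 3`, is a linear combination of the six instances of this
relation obtained by permuting the arguments, so it holds as soon as `q + 3` is invertible.
-/

section

variable {F M : Type*} [Field F] [AddCommGroup M] [Module F M]

def IsDeformedDendriform (q : F) (l r : M →ₗ[F] M →ₗ[F] M) : Prop :=
  (∀ a b c : M,
      (q + 3) • (l (r a b) c - r a (l b c))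
        + (q - 1) • (r a (l c b) - r b (l a c) + r b (l c a) - r c (l a b)) = 0) ∧
    (∀ a b c : M,
      (q + 3) • (r (l a b) c + r (r a b) c - r a (r b c))
        + (q - 1) • (r a (r c b) - r b (r a c) + r b (r c a) - r c (r a b)) = 0) ∧
    ∀ a b c : M,
      (q + 3) • (l (l a b) c - l a (l b c) - l a (r b c))
        + (q - 1) • (l a (l c b) - l b (l a c) + l b (l c a) - l c (l a b)
            + l a (r c b) - l b (r a c) + l b (r c a) - l c (r a b)) = 0

def IsDeformedAssociative (q : F) (μ : M →ₗ[F] M →ₗ[F] M) : Prop :=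
  ∀ x y z : M,
    (q + 3) • (μ (μ x y) z - μ x (μ y z))
      + (q - 1) • (μ x (μ z y) - μ y (μ x z) + μ y (μ z x) - μ z (μ x y)) = 0

theorem IsDeformedDendriform.isDeformedAssociative_add {q : F} {l r : M →ₗ[F] M →ₗ[F] M}
    (h : IsDeformedDendriform q l r) : IsDeformedAssociative q (l + r) := by
  obtain ⟨h₁, h₂, h₃⟩ := h
  intro x y z
  simp only [LinearMap.add_apply, map_add]
  linear_combination (norm := module) h₁ x y z + h₂ x y z + h₃ x y z

def polarBracket (μ : M →ₗ[F] M →ₗ[F] M) (a b : M) : M := (2 : F)⁻¹ • (μ a b - μ b a)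

def polarJordan (μ : M →ₗ[F] M →ₗ[F] M) (a b : M) : M := (2 : F)⁻¹ • (μ a b + μ b a)

namespace IsDeformedAssociative

variable {q : F} {μ : M →ₗ[F] M →ₗ[F] M}

theorem polarBracket_jacobi (h : IsDeformedAssociative q μ) (hq : q + 3 ≠ 0) (a b c : M) :
    polarBracket μ (polarBracket μ a b) c - polarBracket μ (polarBracket μ a c) b
      + polarBracket μ (polarBracket μ b c) a = 0 := by
  refine (smul_eq_zero.mp ?_).resolve_left hq
  simp only [polarBracket, map_sub, map_smul, LinearMap.sub_apply, LinearMap.smul_apply]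
  linear_combination (norm := module) (2⁻¹ * 2⁻¹ : F) • (h a b c - h a c b - h b a c + h b c a
    + h c a b - h c b a)

theorem polarJordan_deformed_assoc (h : IsDeformedAssociative q μ) (hq : q + 3 ≠ 0) (a b c : M) :
    q • polarBracket μ (polarBracket μ a c) b + polarJordan μ (polarJordan μ a b) c
      - polarJordan μ (polarJordan μ b c) a = 0 := by
  refine (smul_eq_zero.mp ?_).resolve_left hq
  simp only [polarBracket, polarJordan, map_add, map_sub, map_smul, LinearMap.add_apply,
    LinearMap.sub_apply, LinearMap.smul_apply]
  linear_combination (norm := module) (2⁻¹ * 2⁻¹ : F) •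
    (h a b c + q • h a c b + h b a c - h b c a - q • h c a b - h c b a)

theorem polarBracket_polarJordan_leibniz (h : IsDeformedAssociative q μ) (hq : q + 3 ≠ 0)
    (a b c : M) :
    polarBracket μ (polarJordan μ a b) c - polarJordan μ (polarBracket μ a c) b
      - polarJordan μ (polarBracket μ b c) a = 0 := by
  refine (smul_eq_zero.mp ?_).resolve_left hq
  simp only [polarBracket, polarJordan, map_add, map_sub, map_smul, LinearMap.add_apply,
    LinearMap.sub_apply, LinearMap.smul_apply]
  linear_combination (norm := module) (2⁻¹ * 2⁻¹ : F) • (h a b c - h a c b + h b a c - h b c a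
    + h c a b + h c b a)

end IsDeformedAssociative

end

theorem deformed_dendriform_gives_SAq_general {F M : Type*} [Field F]
    [AddCommGroup M] [Module F M]
    (l r : M →ₗ[F] M →ₗ[F] M) (q : F) (hq : q ≠ -3)
    (hD1 : ∀ a b c : M,
      (q + 3) • (l (r a b) c - r a (l b c))
        + (q - 1) • (r a (l c b) - r b (l a c) + r b (l c a) - r c (l a b)) = 0)
    (hD2 : ∀ a b c : M,
      (q + 3) • (r (l a b) c + r (r a b) c - r a (r b c))
        + (q - 1) • (r a (r c b) - r b (r a c) + r b (r c a) - r c (r a b)) = 0)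
    (hD3 : ∀ a b c : M,
      (q + 3) • (l (l a b) c - l a (l b c) - l a (r b c))
        + (q - 1) • (l a (l c b) - l b (l a c) + l b (l c a) - l c (l a b)
            + l a (r c b) - l b (r a c) + l b (r c a) - l c (r a b)) = 0)
    (mul br jo : M → M → M)
    (hmul : ∀ a b, mul a b = l a b + r a b)
    (hbr : ∀ a b, br a b = (2 : F)⁻¹ • (mul a b - mul b a))
    (hjo : ∀ a b, jo a b = (2 : F)⁻¹ • (mul a b + mul b a)) :
    ∀ a b c : M,
      br (br a b) c - br (br a c) b + br (br b c) a = 0 ∧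
      q • br (br a c) b + jo (jo a b) c - jo (jo b c) a = 0 ∧
      br (jo a b) c - jo (br a c) b - jo (br b c) a = 0 := by
  have hq3 : q + 3 ≠ 0 := fun h ↦ hq (eq_neg_of_add_eq_zero_left h)
  have hμ : IsDeformedAssociative q (l + r) :=
    IsDeformedDendriform.isDeformedAssociative_add ⟨hD1, hD2, hD3⟩
  have hbr' : br = polarBracket (l + r) := by
    funext a b; simp only [hbr, hmul, polarBracket, LinearMap.add_apply]
  have hjo' : jo = polarJordan (l + r) := by
    funext a b; simp only [hjo, hmul, polarJordan, LinearMap.add_apply]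
  subst hbr' hjo'
  exact fun a b c ↦ ⟨hμ.polarBracket_jacobi hq3 a b c, hμ.polarJordan_deformed_assoc hq3 a b c,
    hμ.polarBracket_polarJordan_leibniz hq3 a b c⟩

/-- If `q ≠ −3` and the three deformed dendriform relations with
parameter `q` hold, then the polarization of the total product `ab := a≺b + a≻b`
satisfies the three relations of the deformed polarized associative operad `SA_q`. -/
theorem deformed_dendriform_gives_SAq {F M : Type*} [Field F] [CharZero F]
    [AddCommGroup M] [Module F M]
    (l r : M →ₗ[F] M →ₗ[F] M) (q : F) (hq : q ≠ -3)
    (hD1 : ∀ a b c : M,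
      (q + 3) • (l (r a b) c - r a (l b c))
        + (q - 1) • (r a (l c b) - r b (l a c) + r b (l c a) - r c (l a b)) = 0)
    (hD2 : ∀ a b c : M,
      (q + 3) • (r (l a b) c + r (r a b) c - r a (r b c))
        + (q - 1) • (r a (r c b) - r b (r a c) + r b (r c a) - r c (r a b)) = 0)
    (hD3 : ∀ a b c : M,
      (q + 3) • (l (l a b) c - l a (l b c) - l a (r b c))
        + (q - 1) • (l a (l c b) - l b (l a c) + l b (l c a) - l c (l a b)
            + l a (r c b) - l b (r a c) + l b (r c a) - l c (r a b)) = 0)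
    (mul br jo : M → M → M)
    (hmul : ∀ a b, mul a b = l a b + r a b)
    (hbr : ∀ a b, br a b = (2 : F)⁻¹ • (mul a b - mul b a))
    (hjo : ∀ a b, jo a b = (2 : F)⁻¹ • (mul a b + mul b a)) :
    ∀ a b c : M,
      br (br a b) c - br (br a c) b + br (br b c) a = 0 ∧
      q • br (br a c) b + jo (jo a b) c - jo (jo b c) a = 0 ∧
      br (jo a b) c - jo (br a c) b - jo (br b c) a = 0 :=
  deformed_dendriform_gives_SAq_general l r q hq hD1 hD2 hD3 mul br jo hmul hbr hjo
end
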